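/- arXiv:1301.0140 — 4 statements merged into one kernel-verified Lean document; each statement's English description precedes it below -/
import Mathlib

section
/- Let ⊙ be a non-degenerate pseudo-multiplication on [0,∞] and let τ be a σ-maxitive measure on a measurable space (E, 𝔅). Then τ has the Radon–Nikodym property with respect to the idempotent ⊙-integral if and only if τ is σ-⊙-finite and σ-principal. -/
open scoped ENNReal
open Set

/-- A pseudo-multiplication on `[0,∞]`: associative, monotone in each argument,
continuous on `(0,∞) × [0,∞]`, with `s ↦ s ⊙ t` continuous on `(0,∞]`,
admitting a left identity, without zero divisors, and with `0` as annihilator. -/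
structure PseudoMul where
  op : ℝ≥0∞ → ℝ≥0∞ → ℝ≥0∞
  assoc : ∀ a b c, op (op a b) c = op a (op b c)
  mono_left : ∀ t, Monotone fun s => op s t
  mono_right : ∀ s, Monotone fun t => op s t
  continuousOn : ContinuousOn (fun p : ℝ≥0∞ × ℝ≥0∞ => op p.1 p.2) (Ioo 0 ⊤ ×ˢ univ)
  continuousOn_left : ∀ t, ContinuousOn (fun s => op s t) (Ioi 0)
  one : ℝ≥0∞
  one_op : ∀ t, op one t = t
  no_zero_divisors : ∀ s t, op s t = 0 → s = 0 ∨ t = 0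
  zero_op : ∀ t, op 0 t = 0
  op_zero : ∀ t, op t 0 = 0

/-- An element `t` is `⊙`-finite if `⨅_{s>0} s ⊙ t = 0`. -/
def PseudoMul.OFinite (P : PseudoMul) (t : ℝ≥0∞) : Prop :=
  ⨅ s ∈ Ioi (0 : ℝ≥0∞), P.op s t = 0

/-- `⊙` is non-degenerate if its left identity is `⊙`-finite. -/
def PseudoMul.Nondegenerate (P : PseudoMul) : Prop :=
  P.OFinite P.one

/-- A σ-maxitive measure: vanishes on `∅` and turns countable unions of
measurable sets into suprema. -/
def SigmaMaxitive {E : Type*} [MeasurableSpace E] (ν : Set E → ℝ≥0∞) : Prop :=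
  ν ∅ = 0 ∧ ∀ B : ℕ → Set E, (∀ n, MeasurableSet (B n)) →
    ν (⋃ n, B n) = ⨆ n, ν (B n)

/-- The idempotent `⊙`-integral `∫_B f ⊙ dν = ⨆_{t ∈ [0,∞)} t ⊙ ν(B ∩ {f > t})`. -/
noncomputable def idemInt {E : Type*} [MeasurableSpace E] (P : PseudoMul) (ν : Set E → ℝ≥0∞)
    (f : E → ℝ≥0∞) (B : Set E) : ℝ≥0∞ :=
  ⨆ t ∈ Iio (⊤ : ℝ≥0∞), P.op t (ν (B ∩ {x | t < f x}))

/-- `ν ≪⊙ τ`: `ν(B) ≤ ∞ ⊙ τ(B)` whenever `τ(B)` is `⊙`-finite. -/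
def OAbsCont {E : Type*} [MeasurableSpace E] (P : PseudoMul)
    (ν τ : Set E → ℝ≥0∞) : Prop :=
  ∀ B : Set E, MeasurableSet B → P.OFinite (τ B) → ν B ≤ P.op ⊤ (τ B)

/-- `τ` is σ-`⊙`-finite. -/
def SigmaOFinite {E : Type*} [MeasurableSpace E] (P : PseudoMul)
    (τ : Set E → ℝ≥0∞) : Prop :=
  ∃ B : ℕ → Set E, (∀ n, MeasurableSet (B n)) ∧ (⋃ n, B n) = univ ∧
    ∀ n, P.OFinite (τ (B n))

/-- A σ-ideal of the σ-algebra: a nonempty collection of measurable sets closed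
under countable unions and under measurable subsets. -/
def IsSigmaIdeal {E : Type*} [MeasurableSpace E] (I : Set (Set E)) : Prop :=
  I.Nonempty ∧ (∀ A ∈ I, MeasurableSet A) ∧
    (∀ B : ℕ → Set E, (∀ n, B n ∈ I) → (⋃ n, B n) ∈ I) ∧
    (∀ A B : Set E, B ∈ I → A ⊆ B → MeasurableSet A → A ∈ I)

/-- `τ` is σ-principal. -/
def SigmaPrincipal {E : Type*} [MeasurableSpace E] (τ : Set E → ℝ≥0∞) : Prop :=
  ∀ I : Set (Set E), IsSigmaIdeal I → ∃ L ∈ I, ∀ S ∈ I, τ (S \ L) = 0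

/-- `τ` has the Radon–Nikodym property w.r.t. the idempotent `⊙`-integral. -/
def HasRNP {E : Type*} [MeasurableSpace E] (P : PseudoMul)
    (τ : Set E → ℝ≥0∞) : Prop :=
  ∀ ν : Set E → ℝ≥0∞, SigmaMaxitive ν → OAbsCont P ν τ →
    ∃ c : E → ℝ≥0∞, Measurable c ∧
      ∀ B : Set E, MeasurableSet B → ν B = idemInt P τ c B


/-!
Necessity. The sets covered by countably many `⊙`-finite sets form a σ-ideal, and the measure
that vanishes on it and equals `1⊙` off it is `≪⊙ τ`. If `E` were not covered, its density `c`
would have `0 ≠ t ⊙ τ {c > t} ≤ 1⊙` for some `t`, so by non-degeneracy `{c > t}` would be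
`⊙`-finite, hence of measure `0`, a contradiction. Given a σ-ideal `I`, the measure
`∞ ⊙ inf_{L ∈ I} τ (· \ L)` is σ-maxitive and `≪⊙ τ`; its density `c` has
`τ (S ∩ {c > 0}) = 0` for `S ∈ I`, and `{c = 0}` lies in some `L ∈ I` up to a `τ`-null set.
This `L` is principal.

Sufficiency. For each rational `q`, σ-principality gives a set `L q`, maximal up to `τ`-null
sets, on which `ν ≤ q ⊙ τ`; taking `L` increasing, the density is `c x = inf {q | x ∈ L q}`.
Then `ν ≤ q ⊙ τ` on `{c < q}`, which gives `ν ≤ ∫ c ⊙ dτ`, while sets disjoint from `L q` carry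
`s ⊙ τ ≤ ν` for `s ≤ q`, which gives `∫ c ⊙ dτ ≤ ν`.
-/

open Filter Topology

namespace PseudoMul

variable (P : PseudoMul)

theorem continuousAt_op_right {q : ℝ≥0∞} (h0 : q ≠ 0) (htop : q ≠ ⊤) (t : ℝ≥0∞) :
    ContinuousAt (P.op q) t := by
  have hmem : (q, t) ∈ Ioo (0 : ℝ≥0∞) ⊤ ×ˢ (univ : Set ℝ≥0∞) :=
    ⟨⟨pos_iff_ne_zero.mpr h0, lt_top_iff_ne_top.mpr htop⟩, mem_univ t⟩
  exact (P.continuousOn.continuousAt ((isOpen_Ioo.prod isOpen_univ).mem_nhds hmem)).comp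
    (continuous_const.prodMk continuous_id).continuousAt

theorem continuousAt_op_left {s : ℝ≥0∞} (hs : s ≠ 0) (x : ℝ≥0∞) :
    ContinuousAt (fun u => P.op u x) s :=
  (P.continuousOn_left x).continuousAt (isOpen_Ioi.mem_nhds (pos_iff_ne_zero.mpr hs))

theorem op_le_of_forall_lt {t x y : ℝ≥0∞} (ht : 0 < t)
    (h : ∀ s, 0 < s → s < t → P.op s x ≤ y) : P.op t x ≤ y := by
  obtain ⟨u, -, hu, hlim⟩ := exists_seq_strictMono_tendsto' ht
  exact le_of_tendsto ((P.continuousAt_op_left ht.ne' x).tendsto.comp hlim)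
    (Eventually.of_forall fun n => h _ (hu n).1 (hu n).2)

theorem op_iSup_of_ne_top {q : ℝ≥0∞} (hq : q ≠ ⊤) {ι : Sort*} (x : ι → ℝ≥0∞) :
    P.op q (⨆ i, x i) = ⨆ i, P.op q (x i) := by
  rcases eq_or_ne q 0 with rfl | h0
  · simp [P.zero_op]
  · exact Monotone.map_iSup_of_continuousAt (P.continuousAt_op_right h0 hq _) (P.mono_right q)
      (P.op_zero q)

theorem op_iSup (q : ℝ≥0∞) {ι : Sort*} (x : ι → ℝ≥0∞) :
    P.op q (⨆ i, x i) = ⨆ i, P.op q (x i) := by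
  rcases ne_or_eq q ⊤ with hq | rfl
  · exact P.op_iSup_of_ne_top hq x
  refine le_antisymm (P.op_le_of_forall_lt ENNReal.zero_lt_top fun s _ hs => ?_)
    (iSup_le fun i => P.mono_right ⊤ (le_iSup x i))
  rw [P.op_iSup_of_ne_top hs.ne]
  exact iSup_mono fun i => P.mono_left (x i) le_top

theorem one_ne_zero : P.one ≠ 0 := by
  intro h
  have h1 := P.one_op 1
  rw [h, P.zero_op] at h1
  exact _root_.one_ne_zero h1.symm

theorem oFinite_zero : P.OFinite 0 :=
  le_antisymm ((iInf₂_le 1 zero_lt_one).trans (P.op_zero 1).le) zero_le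

variable {P}

theorem OFinite.mono {x y : ℝ≥0∞} (hy : P.OFinite y) (h : x ≤ y) : P.OFinite x :=
  le_antisymm ((iInf₂_mono fun s _ => P.mono_right s h).trans hy.le) zero_le

theorem OFinite.of_op {t x : ℝ≥0∞} (h : P.OFinite (P.op t x)) (ht : t ≠ 0) : P.OFinite x := by
  refine le_antisymm ((le_iInf₂ fun s (hs : 0 < s) => ?_).trans h.le) zero_le
  rw [← P.assoc]
  refine iInf₂_le (P.op s t) (pos_iff_ne_zero.mpr fun h0 => ?_)
  exact (P.no_zero_divisors s t h0).elim hs.ne' ht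

theorem exists_rat_gt_op_lt {u y K : ℝ≥0∞} (hu : u < ⊤) (h : P.op u y < K)
    (hy : u = 0 → P.OFinite y) : ∃ q : ℚ, u < ENNReal.ofReal q ∧ P.op (ENNReal.ofReal q) y < K := by
  suffices ∃ β, u < β ∧ ∀ s, u < s → s < β → P.op s y < K by
    obtain ⟨β, huβ, hβ⟩ := this
    obtain ⟨q, -, huq, hqβ⟩ := ENNReal.lt_iff_exists_rat_btwn.mp huβ
    exact ⟨q, huq, hβ _ huq hqβ⟩
  rcases eq_or_ne u 0 with rfl | hu0
  · have hK : ⨅ s ∈ Ioi (0 : ℝ≥0∞), P.op s y < K := by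
      rw [hy rfl]
      exact zero_le.trans_lt h
    obtain ⟨β, hβ, hβK⟩ := by simpa only [iInf_lt_iff] using hK
    exact ⟨β, hβ, fun s _ hs => (P.mono_left y hs.le).trans_lt hβK⟩
  · have hnhds : {s | P.op s y < K} ∈ 𝓝 u :=
      (P.continuousAt_op_left hu0 y).preimage_mem_nhds (Iio_mem_nhds h)
    obtain ⟨β, huβ, hβ⟩ := exists_Ico_subset_of_mem_nhds hnhds ⟨⊤, hu⟩
    exact ⟨β, huβ, fun s hs hsβ => hβ ⟨hs.le, hsβ⟩⟩

end PseudoMul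

theorem Monotone.apply_le_of_forall_exists_gt {α β : Type*} [CompleteLinearOrder α]
    [TopologicalSpace α] [OrderTopology α] [FirstCountableTopology α] [CompleteLattice β]
    {f : α → β} (hf : Monotone f) (hcont : ∀ u : ℕ → α, f (⨆ n, u n) ≤ ⨆ n, f (u n))
    {K : β} {b : α} (hbot : f ⊥ ≤ K) (hstep : ∀ u < b, f u ≤ K → ∃ v, u < v ∧ f v ≤ K) :
    f b ≤ K := by
  set S := {u | f u ≤ K}
  obtain ⟨u, hu, hlim, huS⟩ := exists_seq_tendsto_sSup ⟨⊥, hbot⟩ (OrderTop.bddAbove S)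
  have hsup : sSup S ∈ S := by
    rw [← tendsto_nhds_unique (tendsto_atTop_iSup hu) hlim]
    exact (hcont u).trans (iSup_le huS)
  rcases le_or_gt b (sSup S) with hb | hb
  · exact (hf hb).trans hsup
  · obtain ⟨v, hv, hvS⟩ := hstep _ hb hsup
    exact absurd (le_sSup (s := S) hvS) hv.not_ge

namespace SigmaMaxitive

variable {E : Type*} [MeasurableSpace E] {μ : Set E → ℝ≥0∞}

theorem iUnion (hμ : SigmaMaxitive μ) {ι : Sort*} [Countable ι] (A : ι → Set E)
    (hA : ∀ i, MeasurableSet (A i)) : μ (⋃ i, A i) = ⨆ i, μ (A i) := by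
  cases isEmpty_or_nonempty ι with
  | inl _ => simpa using hμ.1
  | inr _ =>
    obtain ⟨f, hf⟩ := exists_surjective_nat ι
    rw [← hf.iUnion_comp, ← hf.iSup_comp]
    exact hμ.2 _ fun n => hA (f n)

theorem union (hμ : SigmaMaxitive μ) {A B : Set E} (hA : MeasurableSet A)
    (hB : MeasurableSet B) : μ (A ∪ B) = μ A ⊔ μ B := by
  rw [union_eq_iUnion, hμ.iUnion _ (Bool.forall_bool.mpr ⟨hB, hA⟩), sup_eq_iSup]
  exact iSup_congr (Bool.forall_bool.mpr ⟨rfl, rfl⟩)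

theorem mono (hμ : SigmaMaxitive μ) {A B : Set E} (hA : MeasurableSet A)
    (hB : MeasurableSet B) (h : A ⊆ B) : μ A ≤ μ B := by
  rw [← union_eq_self_of_subset_left h, hμ.union hA hB]
  exact le_sup_left

theorem le_of_diff_eq_zero (hμ : SigmaMaxitive μ) {A B : Set E} (hA : MeasurableSet A)
    (hB : MeasurableSet B) (h : μ (A \ B) = 0) : μ A ≤ μ B :=
  calc μ A ≤ μ (B ∪ A \ B) :=
        hμ.mono hA (hB.union (hA.diff hB)) (subset_union_right.trans union_sdiff_self.superset)
    _ = μ B := by rw [hμ.union hB (hA.diff hB), h]; exact max_eq_left zero_le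

theorem op (hμ : SigmaMaxitive μ) (P : PseudoMul) (q : ℝ≥0∞) :
    SigmaMaxitive fun B => P.op q (μ B) :=
  ⟨by simp only [hμ.1, P.op_zero], fun B hB => by simp only [hμ.2 B hB, P.op_iSup]⟩

end SigmaMaxitive

section IdemInt

variable {E : Type*} [MeasurableSpace E] (P : PseudoMul) {ν : Set E → ℝ≥0∞} {f : E → ℝ≥0∞}

theorem op_measure_le_idemInt (B : Set E) {t : ℝ≥0∞} (ht : t < ⊤) :
    P.op t (ν (B ∩ {x | t < f x})) ≤ idemInt P ν f B :=
  le_iSup₂ (f := fun t (_ : t ∈ Iio ⊤) => P.op t (ν (B ∩ {x | t < f x}))) t ht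

theorem exists_op_ne_zero_of_idemInt_ne_zero {B : Set E} (h : idemInt P ν f B ≠ 0) :
    ∃ t < ⊤, P.op t (ν (B ∩ {x | t < f x})) ≠ 0 := by
  by_contra! hall
  exact h (le_antisymm (iSup₂_le fun t ht => (hall t ht).le) zero_le)

theorem idemInt_mono_set (hν : SigmaMaxitive ν) (hf : Measurable f) {B B' : Set E}
    (hB : MeasurableSet B) (hB' : MeasurableSet B') (h : B ⊆ B') :
    idemInt P ν f B ≤ idemInt P ν f B' :=
  iSup₂_mono fun t _ => P.mono_right t <| hν.mono (hB.inter (hf measurableSet_Ioi))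
    (hB'.inter (hf measurableSet_Ioi)) (inter_subset_inter_left _ h)

theorem op_measure_Ici_le_idemInt (hν : SigmaMaxitive ν) (hf : Measurable f) {B : Set E}
    (hB : MeasurableSet B) (s : ℝ≥0∞) : P.op s (ν (B ∩ {x | s ≤ f x})) ≤ idemInt P ν f B := by
  rcases eq_or_ne s 0 with rfl | hs
  · rw [P.zero_op]
    exact zero_le
  refine P.op_le_of_forall_lt (pos_iff_ne_zero.mpr hs) fun u _ hus => ?_
  have hsub : B ∩ {x | s ≤ f x} ⊆ B ∩ {x | u < f x} := fun x hx => ⟨hx.1, hus.trans_le hx.2⟩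
  exact (P.mono_right u (hν.mono (hB.inter (hf measurableSet_Ici))
    (hB.inter (hf measurableSet_Ioi)) hsub)).trans
    (op_measure_le_idemInt P B (hus.trans_le le_top))

theorem idemInt_setOf_eq_zero (hν : ν ∅ = 0) : idemInt P ν f {x | f x = 0} = 0 := by
  refine le_antisymm (iSup₂_le fun t _ => ?_) zero_le
  have hempty : {x | f x = 0} ∩ {x | t < f x} = ∅ :=
    eq_empty_of_forall_notMem fun x ⟨h0, ht⟩ => not_lt_zero (h0 ▸ ht : t < 0)
  rw [hempty, hν, P.op_zero]

theorem measure_inter_pos_eq_zero_of_idemInt_eq_zero (hν : SigmaMaxitive ν) (hf : Measurable f)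
    {B : Set E} (hB : MeasurableSet B) (h : idemInt P ν f B = 0) :
    ν (B ∩ {x | 0 < f x}) = 0 := by
  have hcover : B ∩ {x | 0 < f x} = ⋃ n : ℕ, B ∩ {x | ((n : ℝ≥0∞) + 1)⁻¹ < f x} := by
    ext x
    simp only [mem_inter_iff, mem_iUnion, mem_ofPred_eq]
    refine ⟨fun ⟨hx, hpos⟩ => ?_, fun ⟨n, hx, hn⟩ => ⟨hx, zero_le.trans_lt hn⟩⟩
    obtain ⟨n, hn⟩ := ENNReal.exists_inv_nat_lt hpos.ne'
    exact ⟨n, hx, (ENNReal.inv_le_inv.mpr le_self_add).trans_lt hn⟩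
  rw [hcover, hν.iUnion (fun n : ℕ => B ∩ {x | ((n : ℝ≥0∞) + 1)⁻¹ < f x})
    fun n => hB.inter (hf measurableSet_Ioi), ENNReal.iSup_eq_zero]
  intro n
  have hle := h ▸ op_measure_le_idemInt P B (ENNReal.inv_lt_top.mpr (by positivity) :
    ((n : ℝ≥0∞) + 1)⁻¹ < ⊤)
  exact (P.no_zero_divisors _ _ (nonpos_iff_eq_zero.mp hle)).resolve_left (by simp)

end IdemInt

section SigmaIdeal

noncomputable def offIdeal {E : Type*} (τ : Set E → ℝ≥0∞) (I : Set (Set E)) (B : Set E) : ℝ≥0∞ :=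
  ⨅ L ∈ I, τ (B \ L)

theorem offIdeal_le_diff {E : Type*} {τ : Set E → ℝ≥0∞} {I : Set (Set E)} (B : Set E) {L : Set E}
    (hL : L ∈ I) : offIdeal τ I B ≤ τ (B \ L) :=
  iInf₂_le L hL

theorem offIdeal_eq_zero_of_mem {E : Type*} {τ : Set E → ℝ≥0∞} {I : Set (Set E)} (hτ : τ ∅ = 0)
    {S : Set E} (hS : S ∈ I) : offIdeal τ I S = 0 :=
  le_antisymm ((offIdeal_le_diff S hS).trans (by rw [sdiff_self, hτ])) zero_le

variable {E : Type*} [MeasurableSpace E]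

namespace IsSigmaIdeal

variable {I : Set (Set E)} (hI : IsSigmaIdeal I)
include hI

theorem measurableSet {A : Set E} (hA : A ∈ I) : MeasurableSet A := hI.2.1 A hA

theorem iUnion_mem {A : ℕ → Set E} (hA : ∀ n, A n ∈ I) : ⋃ n, A n ∈ I := hI.2.2.1 A hA

theorem mem_of_subset {A B : Set E} (hB : B ∈ I) (hAB : A ⊆ B) (hA : MeasurableSet A) : A ∈ I :=
  hI.2.2.2 A B hB hAB hA

theorem empty_mem : ∅ ∈ I :=
  hI.mem_of_subset hI.1.some_mem (empty_subset _) .empty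

end IsSigmaIdeal

def downwardClosure (𝒢 : Set (Set E)) : Set (Set E) :=
  {X | MeasurableSet X ∧ ∃ Y ∈ 𝒢, X ⊆ Y}

theorem isSigmaIdeal_downwardClosure {𝒢 : Set (Set E)} (hempty : ∅ ∈ 𝒢)
    (hunion : ∀ Y : ℕ → Set E, (∀ n, Y n ∈ 𝒢) → ⋃ n, Y n ∈ 𝒢) :
    IsSigmaIdeal (downwardClosure 𝒢) := by
  refine ⟨⟨∅, .empty, ∅, hempty, subset_rfl⟩, fun X hX => hX.1, fun X hX => ?_,
    fun X X' ⟨_, Y, hY, hX'Y⟩ hXX' hX => ⟨hX, Y, hY, hXX'.trans hX'Y⟩⟩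
  choose hXm Y hY hXY using hX
  exact ⟨.iUnion hXm, ⋃ n, Y n, hunion Y hY, iUnion_mono hXY⟩

open Classical in
theorem sigmaMaxitive_ite_mem {I : Set (Set E)} (hI : IsSigmaIdeal I) (a : ℝ≥0∞) :
    SigmaMaxitive fun B => if B ∈ I then 0 else a := by
  refine ⟨if_pos hI.empty_mem, fun B hB => ?_⟩
  dsimp only
  by_cases hU : ⋃ n, B n ∈ I
  · have hBI : ∀ n, B n ∈ I := fun n => hI.mem_of_subset hU (subset_iUnion B n) (hB n)
    simp only [if_pos hU, hBI, if_true, ciSup_const]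
  · obtain ⟨n, hn⟩ : ∃ n, B n ∉ I := by
      by_contra! hall
      exact hU (hI.iUnion_mem hall)
    rw [if_neg hU]
    refine le_antisymm (le_iSup_of_le n (by rw [if_neg hn])) (iSup_le fun m => ?_)
    split_ifs <;> simp

variable {τ : Set E → ℝ≥0∞} {I : Set (Set E)}

theorem offIdeal_le (hI : IsSigmaIdeal I) (B : Set E) : offIdeal τ I B ≤ τ B := by
  simpa using offIdeal_le_diff B hI.empty_mem

theorem exists_offIdeal_eq (hτ : SigmaMaxitive τ) (hI : IsSigmaIdeal I) {B : Set E}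
    (hB : MeasurableSet B) : ∃ L ∈ I, τ (B \ L) = offIdeal τ I B := by
  obtain ⟨u, -, hlim, hu⟩ := exists_seq_tendsto_sInf (Set.Nonempty.image
    (fun L => τ (B \ L)) hI.1) (OrderBot.bddBelow _)
  simp only [mem_image] at hu
  choose L hL hLu using hu
  have hLU := hI.iUnion_mem hL
  refine ⟨⋃ n, L n, hLU, le_antisymm ?_ (offIdeal_le_diff B hLU)⟩
  rw [offIdeal, ← sInf_image]
  refine ge_of_tendsto' hlim fun n => (hLu n) ▸ hτ.mono (hB.diff (hI.measurableSet hLU))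
    (hB.diff (hI.measurableSet (hL n))) (sdiff_subset_sdiff_right (subset_iUnion L n))

theorem sigmaMaxitive_offIdeal (hτ : SigmaMaxitive τ) (hI : IsSigmaIdeal I) :
    SigmaMaxitive (offIdeal τ I) := by
  refine ⟨offIdeal_eq_zero_of_mem hτ.1 hI.empty_mem,
    fun B hB => le_antisymm ?_ (iSup_le fun n => le_iInf₂ fun L hL => ?_)⟩
  · choose L hL hLB using fun n => exists_offIdeal_eq hτ hI (hB n)
    have hLU := hI.iUnion_mem hL
    have hBL : ∀ n, MeasurableSet (B n \ ⋃ m, L m) := fun n => (hB n).diff (hI.measurableSet hLU)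
    refine (offIdeal_le_diff _ hLU).trans ?_
    rw [iUnion_sdiff, hτ.2 _ hBL]
    exact iSup_mono fun n => (hτ.mono (hBL n) ((hB n).diff (hI.measurableSet (hL n)))
      (sdiff_subset_sdiff_right (subset_iUnion L n))).trans (hLB n).le
  · exact (offIdeal_le_diff _ hL).trans (hτ.mono ((hB n).diff (hI.measurableSet hL))
      ((MeasurableSet.iUnion hB).diff (hI.measurableSet hL))
      (sdiff_subset_sdiff_left (subset_iUnion B n)))

end SigmaIdeal

section Necessity

variable {E : Type*} [MeasurableSpace E] {P : PseudoMul} {τ : Set E → ℝ≥0∞}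

def oFiniteCovered (P : PseudoMul) (τ : Set E → ℝ≥0∞) : Set (Set E) :=
  downwardClosure {Y | ∃ A : ℕ → Set E, (∀ n, MeasurableSet (A n) ∧ P.OFinite (τ (A n))) ∧
    Y = ⋃ n, A n}

theorem isSigmaIdeal_oFiniteCovered (hτ : τ ∅ = 0) : IsSigmaIdeal (oFiniteCovered P τ) := by
  refine isSigmaIdeal_downwardClosure ⟨fun _ => ∅, fun _ => ⟨.empty, hτ ▸ P.oFinite_zero⟩,
    iUnion_empty.symm⟩ fun Y hY => ?_
  choose A hA hYA using hY
  refine ⟨fun k => A k.unpair.1 k.unpair.2, fun k => hA _ _, ?_⟩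
  rw [iUnion_unpair, iUnion_congr hYA]

theorem mem_oFiniteCovered {B : Set E} (hB : MeasurableSet B) (hBf : P.OFinite (τ B)) :
    B ∈ oFiniteCovered P τ :=
  ⟨hB, B, ⟨fun _ => B, fun _ => ⟨hB, hBf⟩, iUnion_const B |>.symm⟩, subset_rfl⟩

theorem sigmaOFinite_of_univ_mem (h : univ ∈ oFiniteCovered P τ) : SigmaOFinite P τ := by
  obtain ⟨-, _, ⟨A, hA, rfl⟩, hAU⟩ := h
  exact ⟨A, fun n => (hA n).1, univ_subset_iff.mp hAU, fun n => (hA n).2⟩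

theorem HasRNP.sigmaOFinite (hP : P.Nondegenerate) (hτ : SigmaMaxitive τ) (hR : HasRNP P τ) :
    SigmaOFinite P τ := by
  have hI := isSigmaIdeal_oFiniteCovered (P := P) hτ.1
  obtain ⟨c, hc, hνc⟩ := hR _ (sigmaMaxitive_ite_mem hI P.one)
    fun B hB hBf => by simp [mem_oFiniteCovered hB hBf]
  by_contra hU
  have hone : idemInt P τ c univ = P.one := by
    rw [← hνc univ .univ, if_neg (mt sigmaOFinite_of_univ_mem hU)]
  obtain ⟨t, ht, hne⟩ := exists_op_ne_zero_of_idemInt_ne_zero P (hone ▸ P.one_ne_zero)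
  rw [univ_inter] at hne
  have hD : MeasurableSet {x | t < c x} := hc measurableSet_Ioi
  have ht0 : t ≠ 0 := by
    rintro rfl
    exact hne (P.zero_op _)
  have hle := op_measure_le_idemInt P (ν := τ) (f := c) univ ht
  rw [univ_inter, hone] at hle
  have hzero : idemInt P τ c {x | t < c x} = 0 := by
    rw [← hνc _ hD, if_pos (mem_oFiniteCovered hD ((hP.mono hle).of_op ht0))]
  have hle' := op_measure_le_idemInt P (ν := τ) (f := c) {x | t < c x} ht
  rw [inter_self, hzero] at hle'
  exact hne (nonpos_iff_eq_zero.mp hle')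

theorem HasRNP.sigmaPrincipal (hτ : SigmaMaxitive τ) (hR : HasRNP P τ) : SigmaPrincipal τ := by
  intro I hI
  obtain ⟨c, hc, hνc⟩ :=
    hR (fun B => P.op ⊤ (offIdeal τ I B)) ((sigmaMaxitive_offIdeal hτ hI).op P ⊤)
    fun B _ _ => P.mono_right ⊤ (offIdeal_le hI B)
  have hN : MeasurableSet {x | c x = 0} := hc (measurableSet_singleton 0)
  obtain ⟨L, hL, hNL⟩ := exists_offIdeal_eq hτ hI hN
  have hLm := hI.measurableSet hL
  refine ⟨L, hL, fun S hS => ?_⟩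
  have hSm := hI.measurableSet hS
  have hpos : τ (S ∩ {x | 0 < c x}) = 0 :=
    measure_inter_pos_eq_zero_of_idemInt_eq_zero P hτ hc hSm
      (by rw [← hνc S hSm, offIdeal_eq_zero_of_mem hτ.1 hS, P.op_zero])
  have hzero : τ ({x | c x = 0} \ L) = 0 := by
    have h := (hνc _ hN).trans (idemInt_setOf_eq_zero P hτ.1)
    rw [hNL]
    exact (P.no_zero_divisors _ _ h).resolve_left ENNReal.top_ne_zero
  have hsub : S \ L ⊆ S ∩ {x | 0 < c x} ∪ {x | c x = 0} \ L := fun x ⟨hxS, hxL⟩ =>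
    (eq_or_ne (c x) 0).elim (fun h0 => .inr ⟨h0, hxL⟩) fun h0 => .inl ⟨hxS, pos_iff_ne_zero.mpr h0⟩
  have hPm : MeasurableSet (S ∩ {x | 0 < c x}) := hSm.inter (hc measurableSet_Ioi)
  refine nonpos_iff_eq_zero.mp ((hτ.mono (hSm.diff hLm) (hPm.union (hN.diff hLm)) hsub).trans ?_)
  rw [hτ.union hPm (hN.diff hLm), hpos, hzero, max_self]

end Necessity

section DominatedIdeal

variable {E : Type*} [MeasurableSpace E] (P : PseudoMul) {τ ν : Set E → ℝ≥0∞}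

def dominatedIdeal (P : PseudoMul) (ν τ : Set E → ℝ≥0∞) (v : ℝ≥0∞) : Set (Set E) :=
  {A | MeasurableSet A ∧ ∀ A' ⊆ A, MeasurableSet A' → ν A' ≤ P.op v (τ A')}

theorem dominatedIdeal_mono {v w : ℝ≥0∞} (h : v ≤ w) :
    dominatedIdeal P ν τ v ⊆ dominatedIdeal P ν τ w :=
  fun _ ⟨hA, hdom⟩ => ⟨hA, fun A' hA' hA'm => (hdom A' hA' hA'm).trans (P.mono_left _ h)⟩

theorem iUnion_mem_dominatedIdeal (hτ : SigmaMaxitive τ) (hν : SigmaMaxitive ν) {v : ℝ≥0∞}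
    {ι : Type*} [Countable ι] {A : ι → Set E} (hA : ∀ i, A i ∈ dominatedIdeal P ν τ v) :
    ⋃ i, A i ∈ dominatedIdeal P ν τ v := by
  refine ⟨.iUnion fun i => (hA i).1, fun A' hA' hA'm => ?_⟩
  have hmeas : ∀ i, MeasurableSet (A' ∩ A i) := fun i => hA'm.inter (hA i).1
  have hA'eq : A' = ⋃ i, A' ∩ A i := by rw [← inter_iUnion, inter_eq_left.mpr hA']
  calc ν A' = ⨆ i, ν (A' ∩ A i) := by rw [hA'eq, hν.iUnion _ hmeas, ← hA'eq]
    _ ≤ ⨆ i, P.op v (τ (A' ∩ A i)) := iSup_mono fun i => (hA i).2 _ inter_subset_right (hmeas i)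
    _ = P.op v (τ A') := by rw [← P.op_iSup, ← hτ.iUnion _ hmeas, ← hA'eq]

theorem isSigmaIdeal_dominatedIdeal (hτ : SigmaMaxitive τ) (hν : SigmaMaxitive ν) (v : ℝ≥0∞) :
    IsSigmaIdeal (dominatedIdeal P ν τ v) := by
  have hempty : (∅ : Set E) ∈ dominatedIdeal P ν τ v :=
    ⟨.empty, fun A' hA' _ => by rw [subset_empty_iff.mp hA', hν.1]; exact zero_le⟩
  exact ⟨⟨∅, hempty⟩, fun A hA => hA.1, fun A hA => iUnion_mem_dominatedIdeal P hτ hν hA,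
    fun A B ⟨_, hB⟩ hAB hA => ⟨hA, fun A' hA' => hB A' (hA'.trans hAB)⟩⟩

/-- A set `M ⊆ A` that is maximal up to `τ`-null sets among those with `s ⊙ τ ≤ ν` leaves
`A \ M` in `dominatedIdeal P ν τ s`, hence `τ`-null. -/
theorem op_le_of_forall_dominatedIdeal_null (hτ : SigmaMaxitive τ) (hν : SigmaMaxitive ν)
    (hac : OAbsCont P ν τ) (hσp : SigmaPrincipal τ) {s : ℝ≥0∞} {A : Set E}
    (hA : MeasurableSet A) (hnull : ∀ S ∈ dominatedIdeal P ν τ s, S ⊆ A → τ S = 0) :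
    P.op s (τ A) ≤ ν A := by
  have hH : IsSigmaIdeal (downwardClosure
      {Y | MeasurableSet Y ∧ Y ⊆ A ∧ P.op s (τ Y) ≤ ν Y}) := by
    refine isSigmaIdeal_downwardClosure
      ⟨.empty, empty_subset A, by rw [hτ.1, P.op_zero]; exact zero_le⟩ fun Y hY => ?_
    choose hYm hYA hYν using hY
    refine ⟨.iUnion hYm, iUnion_subset hYA, ?_⟩
    rw [hτ.2 Y hYm, P.op_iSup, hν.2 Y hYm]
    exact iSup_mono hYν
  obtain ⟨M₀, ⟨-, M, ⟨hM, hMA, hMν⟩, hM₀M⟩, hM₀⟩ := hσp _ hH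
  have hrest : τ (A \ M) = 0 := by
    refine hnull _ ⟨hA.diff hM, fun A' hA' hA'm => ?_⟩ sdiff_subset
    refine (le_or_gt (P.op s (τ A')) (ν A')).elim (fun hge => ?_) le_of_lt
    have hdisj : A' \ M₀ = A' := sdiff_eq_left.mpr
      (disjoint_left.mpr fun x hx hxM₀ => (hA' hx).2 (hM₀M hxM₀))
    have hτ0 : τ A' = 0 :=
      hdisj ▸ hM₀ A' ⟨hA'm, A', ⟨hA'm, hA'.trans sdiff_subset, hge⟩, subset_rfl⟩
    have hν0 := hac A' hA'm (hτ0 ▸ P.oFinite_zero)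
    rw [hτ0, P.op_zero] at hν0
    exact hν0.trans zero_le
  calc P.op s (τ A) ≤ P.op s (τ M) := P.mono_right s (hτ.le_of_diff_eq_zero hA hM hrest)
    _ ≤ ν M := hMν
    _ ≤ ν A := hν.mono hM hA hMA

theorem exists_monotone_principal_family (hτ : SigmaMaxitive τ) (hν : SigmaMaxitive ν)
    (hσp : SigmaPrincipal τ) :
    ∃ L : ℚ → Set E, Monotone L ∧ ∀ q : ℚ, L q ∈ dominatedIdeal P ν τ (ENNReal.ofReal q) ∧
      ∀ S ∈ dominatedIdeal P ν τ (ENNReal.ofReal q), τ (S \ L q) = 0 := by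
  choose L₀ hL₀ hL₀null using fun q : ℚ =>
    hσp _ (isSigmaIdeal_dominatedIdeal P hτ hν (ENNReal.ofReal q))
  refine ⟨fun q => ⋃ p : {p : ℚ // p ≤ q}, L₀ p, fun q r hqr =>
    iUnion_subset fun p => subset_iUnion_of_subset ⟨p, p.2.trans hqr⟩ subset_rfl,
    fun q => ⟨iUnion_mem_dominatedIdeal P hτ hν fun p => dominatedIdeal_mono P
      (ENNReal.ofReal_le_ofReal (Rat.cast_le.mpr p.2)) (hL₀ p), fun S hS => ?_⟩⟩
  have hSm := (isSigmaIdeal_dominatedIdeal P hτ hν _).measurableSet hS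
  have hsub : S \ ⋃ p : {p : ℚ // p ≤ q}, L₀ p ⊆ S \ L₀ q :=
    sdiff_subset_sdiff_right (subset_iUnion_of_subset ⟨q, le_rfl⟩ subset_rfl)
  refine nonpos_iff_eq_zero.mp ((hτ.mono (hSm.diff ?_) (hSm.diff (hL₀ q).1) hsub).trans
    (hL₀null q S hS).le)
  exact .iUnion fun p => (hL₀ p).1

end DominatedIdeal

section Density

open Classical in
noncomputable def densityOfLevels {E : Type*} (L : ℚ → Set E) (x : E) : ℝ≥0∞ :=
  ⨅ q : ℚ, if x ∈ L q then ENNReal.ofReal q else ⊤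

variable {E : Type*} {L : ℚ → Set E}

theorem densityOfLevels_le {x : E} {q : ℚ} (h : x ∈ L q) :
    densityOfLevels L x ≤ ENNReal.ofReal q :=
  (iInf_le _ q).trans (by rw [if_pos h])

theorem mem_of_densityOfLevels_lt (hL : Monotone L) {x : E} {q : ℚ}
    (h : densityOfLevels L x < ENNReal.ofReal q) : x ∈ L q := by
  obtain ⟨p, hp⟩ := iInf_lt_iff.mp h
  split_ifs at hp with hx
  · exact hL (Rat.cast_lt.mp (ENNReal.ofReal_lt_ofReal_iff'.mp hp).1).le hx
  · exact absurd hp not_top_lt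

theorem measurable_densityOfLevels [MeasurableSpace E] (hL : ∀ q, MeasurableSet (L q)) :
    Measurable (densityOfLevels L) :=
  .iInf fun q => Measurable.ite (hL q) measurable_const measurable_const

end Density

section Sufficiency

variable {E : Type*} [MeasurableSpace E] (P : PseudoMul) {τ ν : Set E → ℝ≥0∞}

theorem idemInt_densityOfLevels_le (hτ : SigmaMaxitive τ) (hν : SigmaMaxitive ν)
    (hac : OAbsCont P ν τ) (hσp : SigmaPrincipal τ) {L : ℚ → Set E}
    (hL : ∀ q : ℚ, L q ∈ dominatedIdeal P ν τ (ENNReal.ofReal q) ∧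
      ∀ S ∈ dominatedIdeal P ν τ (ENNReal.ofReal q), τ (S \ L q) = 0)
    {B : Set E} (hB : MeasurableSet B) : idemInt P τ (densityOfLevels L) B ≤ ν B := by
  refine iSup₂_le fun t _ => ?_
  rcases eq_or_ne t 0 with rfl | ht0
  · rw [P.zero_op]
    exact zero_le
  have hA : MeasurableSet (B ∩ {x | t < densityOfLevels L x}) :=
    hB.inter (measurable_densityOfLevels (fun q => (hL q).1.1) measurableSet_Ioi)
  refine P.op_le_of_forall_lt (pos_iff_ne_zero.mpr ht0) fun s _ hst => ?_
  obtain ⟨q, -, hsq, hqt⟩ := ENNReal.lt_iff_exists_rat_btwn.mp hst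
  refine (op_le_of_forall_dominatedIdeal_null P hτ hν hac hσp hA fun S hS hSA => ?_).trans
    (hν.mono hA hB inter_subset_left)
  have hdisj : S \ L q = S := sdiff_eq_left.mpr <| disjoint_left.mpr fun x hxS hxL =>
    (densityOfLevels_le hxL).not_gt (hqt.trans (hSA hxS).2)
  rw [← hdisj]
  exact (hL q).2 S (dominatedIdeal_mono P hsq.le hS)

/-- Continuous induction on the level `u` of `ν (B ∩ {c < u})`: at each `u`, the bound
`u ⊙ τ (B ∩ {u ≤ c}) ≤ ∫_B c ⊙ dτ` persists slightly beyond `u`. -/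
theorem measure_lt_top_le_idemInt (hτ : SigmaMaxitive τ) (hν : SigmaMaxitive ν) {c : E → ℝ≥0∞}
    (hc : Measurable c) (hdom : ∀ (q : ℚ) (A : Set E), MeasurableSet A →
      (∀ x ∈ A, c x < ENNReal.ofReal q) → ν A ≤ P.op (ENNReal.ofReal q) (τ A))
    {B : Set E} (hB : MeasurableSet B) (hBf : P.OFinite (τ B)) :
    ν (B ∩ {x | c x < ⊤}) ≤ idemInt P τ c B := by
  refine le_of_forall_gt_imp_ge_of_dense fun K hK => ?_
  have hlev : ∀ u, MeasurableSet (B ∩ {x | c x < u}) := fun u => hB.inter (hc measurableSet_Iio)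
  refine Monotone.apply_le_of_forall_exists_gt (f := fun u => ν (B ∩ {x | c x < u}))
    (fun u v huv => hν.mono (hlev u) (hlev v) fun x hx => ⟨hx.1, hx.2.trans_le huv⟩)
    (fun u => ?_) ?_ (fun u hu hfu => ?_)
  · have hU : B ∩ {x | c x < ⨆ n, u n} = ⋃ n, B ∩ {x | c x < u n} := by
      ext x
      simp only [mem_inter_iff, mem_iUnion, mem_ofPred_eq, lt_iSup_iff, exists_and_left]
    exact (congrArg ν hU).trans (hν.iUnion _ fun n => hlev (u n)) |>.le
  · simp [hν.1]
  have hy : MeasurableSet (B ∩ {x | u ≤ c x}) := hB.inter (hc measurableSet_Ici)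
  obtain ⟨q, huq, hqK⟩ := P.exists_rat_gt_op_lt hu
    ((op_measure_Ici_le_idemInt P hτ hc hB u).trans_lt hK)
    fun _ => hBf.mono (hτ.mono hy hB inter_subset_left)
  have hA : MeasurableSet (B ∩ {x | u ≤ c x} ∩ {x | c x < ENNReal.ofReal q}) :=
    hy.inter (hc measurableSet_Iio)
  refine ⟨ENNReal.ofReal q, huq, ?_⟩
  calc ν (B ∩ {x | c x < ENNReal.ofReal q})
      ≤ ν (B ∩ {x | c x < u} ∪ B ∩ {x | u ≤ c x} ∩ {x | c x < ENNReal.ofReal q}) :=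
        hν.mono (hlev _) ((hlev u).union hA) fun x hx =>
          (lt_or_ge (c x) u).imp (fun h => ⟨hx.1, h⟩) fun h => ⟨⟨hx.1, h⟩, hx.2⟩
    _ = ν (B ∩ {x | c x < u}) ⊔ ν (B ∩ {x | u ≤ c x} ∩ {x | c x < ENNReal.ofReal q}) :=
        hν.union (hlev u) hA
    _ ≤ K := sup_le hfu <| (hdom q _ hA fun x hx => hx.2).trans <|
        (P.mono_right _ (hτ.mono hA hy inter_subset_left)).trans hqK.le

theorem le_idemInt_of_oFinite (hτ : SigmaMaxitive τ) (hν : SigmaMaxitive ν)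
    (hac : OAbsCont P ν τ) {c : E → ℝ≥0∞} (hc : Measurable c)
    (hdom : ∀ (q : ℚ) (A : Set E), MeasurableSet A →
      (∀ x ∈ A, c x < ENNReal.ofReal q) → ν A ≤ P.op (ENNReal.ofReal q) (τ A))
    {B : Set E} (hB : MeasurableSet B) (hBf : P.OFinite (τ B)) :
    ν B ≤ idemInt P τ c B := by
  have hlt : MeasurableSet (B ∩ {x | c x < ⊤}) := hB.inter (hc measurableSet_Iio)
  have htop : MeasurableSet (B ∩ {x | ⊤ ≤ c x}) := hB.inter (hc measurableSet_Ici)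
  have hsub : B ⊆ B ∩ {x | c x < ⊤} ∪ B ∩ {x | ⊤ ≤ c x} := fun x hx =>
    (lt_or_ge (c x) ⊤).imp (⟨hx, ·⟩) (⟨hx, ·⟩)
  refine (hν.mono hB (hlt.union htop) hsub).trans ?_
  rw [hν.union hlt htop]
  refine sup_le (measure_lt_top_le_idemInt P hτ hν hc hdom hB hBf) ?_
  exact (hac _ htop (hBf.mono (hτ.mono htop hB inter_subset_left))).trans
    (op_measure_Ici_le_idemInt P hτ hc hB ⊤)

theorem le_idemInt (hτ : SigmaMaxitive τ) (hν : SigmaMaxitive ν) (hac : OAbsCont P ν τ)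
    (hσf : SigmaOFinite P τ) {c : E → ℝ≥0∞} (hc : Measurable c)
    (hdom : ∀ (q : ℚ) (A : Set E), MeasurableSet A →
      (∀ x ∈ A, c x < ENNReal.ofReal q) → ν A ≤ P.op (ENNReal.ofReal q) (τ A))
    {B : Set E} (hB : MeasurableSet B) : ν B ≤ idemInt P τ c B := by
  obtain ⟨F, hFm, hFU, hFf⟩ := hσf
  have hBF : ∀ n, MeasurableSet (B ∩ F n) := fun n => hB.inter (hFm n)
  calc ν B = ⨆ n, ν (B ∩ F n) := by rw [← hν.iUnion _ hBF, ← inter_iUnion, hFU, inter_univ]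
    _ ≤ ⨆ n, idemInt P τ c (B ∩ F n) := iSup_mono fun n =>
        le_idemInt_of_oFinite P hτ hν hac hc hdom (hBF n)
          ((hFf n).mono (hτ.mono (hBF n) (hFm n) inter_subset_right))
    _ ≤ idemInt P τ c B := iSup_le fun n => idemInt_mono_set P hτ hc (hBF n) hB inter_subset_left

theorem hasRNP_of_sigmaOFinite_of_sigmaPrincipal (hτ : SigmaMaxitive τ) (hσf : SigmaOFinite P τ)
    (hσp : SigmaPrincipal τ) : HasRNP P τ := by
  intro ν hν hac
  obtain ⟨L, hLmono, hL⟩ := exists_monotone_principal_family P hτ hν hσp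
  have hc := measurable_densityOfLevels fun q => (hL q).1.1
  refine ⟨densityOfLevels L, hc, fun B hB => le_antisymm ?_
    (idemInt_densityOfLevels_le P hτ hν hac hσp hL hB)⟩
  exact le_idemInt P hτ hν hac hσf hc (fun q A hA hAc =>
    (hL q).1.2 A (fun x hx => mem_of_densityOfLevels_lt hLmono (hAc x hx)) hA) hB

end Sufficiency

/-- The idempotent Radon–Nikodym theorem and its converse: for a non-degenerate
pseudo-multiplication `⊙`, a σ-maxitive measure `τ` has the Radon–Nikodym
property w.r.t. the idempotent `⊙`-integral iff it is σ-`⊙`-finite and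
σ-principal. -/
theorem rnp_iff_sigmaOFinite_and_sigmaPrincipal
    {E : Type*} [MeasurableSpace E] (P : PseudoMul) (hP : P.Nondegenerate)
    (τ : Set E → ℝ≥0∞) (hτ : SigmaMaxitive τ) :
    HasRNP P τ ↔ SigmaOFinite P τ ∧ SigmaPrincipal τ :=
  ⟨fun hR => ⟨hR.sigmaOFinite hP hτ, hR.sigmaPrincipal hτ⟩,
    fun ⟨hσf, hσp⟩ => hasRNP_of_sigmaOFinite_of_sigmaPrincipal P hτ hσf hσp⟩
end

section
/- Let ⊙ be a pseudo-multiplication on [0,∞], let ν be a σ-maxitive measure on a measurable space (E, 𝔅), let f : E → [0,∞] be measurable, and let r ∈ [0,∞). Then ∫_E (r ⊙ f) ⊙ dν = r ⊙ ∫_E f ⊙ dν, where r ⊙ f denotes the function x ↦ r ⊙ f(x). -/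
open scoped ENNReal
open Set

/-! For `0 < r < ∞` the map `u ↦ r ⊙ u` is continuous, monotone and fixes `0`, so it commutes
with suprema and `r ⊙ ∫ f ⊙ dν = ⨆ₜ (r ⊙ t) ⊙ ν{f > t}`. Each level set `{r ⊙ f > s}` is the
countable union of the sets `{f > q}` over the rationals `q` with `r ⊙ q > s`, so σ-maxitivity
bounds `s ⊙ ν{r ⊙ f > s}` by that supremum. Conversely, by left continuity of `⊙`,
`(r ⊙ t) ⊙ ν{f > t}` is the supremum of `s ⊙ ν{f > t} ≤ s ⊙ ν{r ⊙ f > s}` over `s < r ⊙ t`. -/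

open Filter Topology

lemma SigmaMaxitive.apply_iUnion {E : Type*} [MeasurableSpace E] {ν : Set E → ℝ≥0∞}
    (hν : SigmaMaxitive ν) {ι : Type*} [Countable ι] {B : ι → Set E}
    (hB : ∀ i, MeasurableSet (B i)) : ν (⋃ i, B i) = ⨆ i, ν (B i) := by
  rcases isEmpty_or_nonempty ι with _ | _
  · simp [hν.1]
  · obtain ⟨e, he⟩ := exists_surjective_nat ι
    rw [← he.iUnion_comp, ← he.iSup_comp]
    exact hν.2 _ fun n => hB (e n)

lemma SigmaMaxitive.mono_s8 {E : Type*} [MeasurableSpace E] {ν : Set E → ℝ≥0∞}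
    (hν : SigmaMaxitive ν) {A C : Set E} (hA : MeasurableSet A) (hC : MeasurableSet C)
    (hAC : A ⊆ C) : ν A ≤ ν C := by
  have hunion : ν (A ∪ C) = ν A ⊔ ν C := by
    rw [union_eq_iUnion, hν.apply_iUnion (Bool.forall_bool.2 ⟨hC, hA⟩), iSup_bool_eq]
    rfl
  rw [← union_eq_right.2 hAC, hunion]
  exact le_sup_left

lemma ENNReal.exists_rat_lt_and_lt_apply {g : ℝ≥0∞ → ℝ≥0∞} {s y : ℝ≥0∞}
    (hg : ContinuousAt g y) (hy : y ≠ 0) (hs : s < g y) :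
    ∃ q : ℚ, s < g (ENNReal.ofReal q) ∧ ENNReal.ofReal q < y := by
  have hU : g ⁻¹' Ioi s ∈ 𝓝[<] y := nhdsWithin_le_nhds (hg (Ioi_mem_nhds hs))
  obtain ⟨a, hay, hsub⟩ :=
    (mem_nhdsLT_iff_exists_Ioo_subset' (pos_iff_ne_zero.2 hy)).1 hU
  obtain ⟨q, -, haq, hqy⟩ := ENNReal.lt_iff_exists_rat_btwn.1 hay
  exact ⟨q, hsub ⟨haq, hqy⟩, hqy⟩

lemma setOf_lt_comp_eq_iUnion_rat {E : Type*} {g : ℝ≥0∞ → ℝ≥0∞} (hg : Continuous g)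
    (hg_mono : Monotone g) (hg0 : g 0 = 0) (f : E → ℝ≥0∞) (s : ℝ≥0∞) :
    {x | s < g (f x)} =
      ⋃ q : ℚ, {x | s < g (ENNReal.ofReal q) ∧ ENNReal.ofReal q < f x} := by
  ext x
  simp only [mem_ofPred_eq, mem_iUnion]
  constructor
  · intro hs
    have hfx : f x ≠ 0 := by
      rintro h
      rw [h, hg0] at hs
      exact not_lt_zero hs
    exact ENNReal.exists_rat_lt_and_lt_apply hg.continuousAt hfx hs
  · rintro ⟨q, hsq, hqf⟩
    exact hsq.trans_le (hg_mono hqf.le)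

lemma idemInt_zero {E : Type*} [MeasurableSpace E] (P : PseudoMul) {ν : Set E → ℝ≥0∞}
    (hν : ν ∅ = 0) (B : Set E) : idemInt P ν 0 B = 0 := by
  simp [idemInt, hν, P.op_zero]

namespace PseudoMul

variable (P : PseudoMul) {r : ℝ≥0∞}

lemma continuous_op_right (hr0 : 0 < r) (hr : r < ⊤) : Continuous (P.op r) := by
  refine continuous_iff_continuousAt.2 fun u => ?_
  have hjoint := P.continuousOn.continuousAt
    (prod_mem_nhds (Ioo_mem_nhds hr0 hr) (univ_mem (f := 𝓝 u)))
  exact hjoint.comp (continuous_const.prodMk continuous_id).continuousAt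

lemma op_iSup_s8 (hr0 : 0 < r) (hr : r < ⊤) {ι : Sort*} (g : ι → ℝ≥0∞) :
    P.op r (⨆ i, g i) = ⨆ i, P.op r (g i) :=
  (P.mono_right r).map_iSup_of_continuousAt (P.continuous_op_right hr0 hr).continuousAt
    (P.op_zero r)

lemma op_le_of_forall_lt_s8 {c u S : ℝ≥0∞} (hc : 0 < c) (h : ∀ s ∈ Ioo 0 c, P.op s u ≤ S) :
    P.op c u ≤ S := by
  have : (𝓝[Ioo (0 : ℝ≥0∞) c] c).NeBot := right_nhdsWithin_Ioo_neBot hc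
  have hlim : Tendsto (fun s => P.op s u) (𝓝[Ioo 0 c] c) (𝓝 (P.op c u)) :=
    (P.continuousOn_left u c hc).mono_left (nhdsWithin_mono c Ioo_subset_Ioi_self)
  exact le_of_tendsto hlim (eventually_nhdsWithin_of_forall h)

section Integral

variable {E : Type*} [MeasurableSpace E] {ν : Set E → ℝ≥0∞} {f : E → ℝ≥0∞} {B : Set E}

lemma op_idemInt (hr0 : 0 < r) (hr : r < ⊤) :
    P.op r (idemInt P ν f B) =
      ⨆ t ∈ Iio (⊤ : ℝ≥0∞), P.op (P.op r t) (ν (B ∩ {x | t < f x})) := by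
  simp only [idemInt, P.op_iSup_s8 hr0 hr, P.assoc]

lemma idemInt_op_le (hν : SigmaMaxitive ν) (hf : Measurable f) (hB : MeasurableSet B)
    (hr0 : 0 < r) (hr : r < ⊤) :
    idemInt P ν (fun x => P.op r (f x)) B ≤
      ⨆ t ∈ Iio (⊤ : ℝ≥0∞), P.op (P.op r t) (ν (B ∩ {x | t < f x})) := by
  refine iSup₂_le fun s hs => ?_
  rcases eq_zero_or_pos s with rfl | hs0
  · rw [P.zero_op]
    exact zero_le
  have hlevel : ν (B ∩ {x | s < P.op r (f x)}) =
      ⨆ q : ℚ, ν (B ∩ {x | s < P.op r (ENNReal.ofReal q) ∧ ENNReal.ofReal q < f x}) := by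
    rw [setOf_lt_comp_eq_iUnion_rat (P.continuous_op_right hr0 hr) (P.mono_right r)
      (P.op_zero r), inter_iUnion]
    refine hν.apply_iUnion fun q => hB.inter ?_
    simp only [ofPred_and]
    exact (MeasurableSet.const _).inter (measurableSet_lt measurable_const hf)
  rw [hlevel, P.op_iSup_s8 hs0 hs]
  refine iSup_le fun q => ?_
  by_cases hsq : s < P.op r (ENNReal.ofReal q)
  · simp only [hsq, true_and]
    exact (P.mono_left _ hsq.le).trans (le_iSup₂_of_le _ ENNReal.ofReal_lt_top le_rfl)
  · simp [hsq, hν.1, P.op_zero]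

lemma op_le_idemInt_op (hν : SigmaMaxitive ν) (hf : Measurable f) (hB : MeasurableSet B)
    (hr0 : 0 < r) (hr : r < ⊤) (t : ℝ≥0∞) :
    P.op (P.op r t) (ν (B ∩ {x | t < f x})) ≤ idemInt P ν (fun x => P.op r (f x)) B := by
  rcases eq_zero_or_pos (P.op r t) with hrt | hrt
  · rw [hrt, P.zero_op]
    exact zero_le
  refine P.op_le_of_forall_lt_s8 hrt fun s hs => ?_
  have hrf : Measurable fun x => P.op r (f x) := (P.continuous_op_right hr0 hr).measurable.comp hf
  have hsub : B ∩ {x | t < f x} ⊆ B ∩ {x | s < P.op r (f x)} :=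
    inter_subset_inter_right B fun x hx => hs.2.trans_le (P.mono_right r hx.le)
  refine (P.mono_right s (hν.mono_s8 (hB.inter (measurableSet_lt measurable_const hf))
    (hB.inter (measurableSet_lt measurable_const hrf)) hsub)).trans ?_
  exact le_iSup₂_of_le s (hs.2.trans_le le_top) le_rfl

end Integral

end PseudoMul

/-- Homogeneity of the idempotent `⊙`-integral. -/
theorem idemInt_homogeneous {E : Type*} [MeasurableSpace E] (P : PseudoMul)
    (ν : Set E → ℝ≥0∞) (hν : SigmaMaxitive ν)
    (f : E → ℝ≥0∞) (hf : Measurable f) (r : ℝ≥0∞) (hr : r < ⊤) :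
    idemInt P ν (fun x => P.op r (f x)) univ = P.op r (idemInt P ν f univ) := by
  rcases eq_zero_or_pos r with rfl | hr0
  · have hzero : (fun x => P.op 0 (f x)) = 0 := funext fun x => P.zero_op (f x)
    rw [hzero, idemInt_zero P hν.1, P.zero_op]
  rw [P.op_idemInt hr0 hr]
  exact le_antisymm (P.idemInt_op_le hν hf MeasurableSet.univ hr0 hr)
    (iSup₂_le fun t _ => P.op_le_idemInt_op hν hf MeasurableSet.univ hr0 hr t)
end

section
/- Let ⊙ be a pseudo-multiplication on [0,∞], let ν be a σ-maxitive measure on a measurable space (E, 𝔅), and let (fₙ) be a sequence of measurable maps fₙ : E → [0,∞]. Then ∫_E (⨆ₙ fₙ) ⊙ dν = ⨆ₙ ∫_E fₙ ⊙ dν, where ⨆ₙ fₙ denotes the pointwise supremum. -/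
open scoped ENNReal
open Set

/-- σ-maxitivity of the idempotent `⊙`-integral. -/
theorem idemInt_iSup {E : Type*} [MeasurableSpace E] (P : PseudoMul)
    (ν : Set E → ℝ≥0∞) (hν : SigmaMaxitive ν)
    (f : ℕ → E → ℝ≥0∞) (hf : ∀ n, Measurable (f n)) :
    idemInt P ν (fun x => ⨆ n, f n x) univ = ⨆ n, idemInt P ν (f n) univ := by
  have key : ∀ t : ℝ≥0∞, t < ⊤ →
      P.op t (ν (univ ∩ {x | t < ⨆ n, f n x})) =
        ⨆ n, P.op t (ν (univ ∩ {x | t < f n x})) := by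
    intro t ht
    have hset : {x : E | t < ⨆ n, f n x} = ⋃ n, {x | t < f n x} := by
      ext x; simp [lt_iSup_iff]
    have hmeas : ∀ n, MeasurableSet {x : E | t < f n x} := fun n =>
      measurableSet_lt measurable_const (hf n)
    have hnu : ν (⋃ n, {x : E | t < f n x}) = ⨆ n, ν {x | t < f n x} :=
      hν.2 _ hmeas
    rcases eq_or_ne t 0 with rfl | ht0
    · simp [P.zero_op]
    · have hct : ContinuousAt (fun y => P.op t y) (⨆ n, ν {x | t < f n x}) := by
        have hopen : IsOpen (Ioo (0:ℝ≥0∞) ⊤ ×ˢ (univ : Set ℝ≥0∞)) :=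
          isOpen_Ioo.prod isOpen_univ
        have hmem : (t, ⨆ n, ν {x : E | t < f n x}) ∈ Ioo (0:ℝ≥0∞) ⊤ ×ˢ (univ : Set ℝ≥0∞) := by
          exact ⟨⟨pos_iff_ne_zero.mpr ht0, ht⟩, mem_univ _⟩
        have := (P.continuousOn.continuousAt (hopen.mem_nhds hmem))
        exact this.comp (Continuous.continuousAt (by continuity))
      have hmono : Monotone fun y => P.op t y := P.mono_right t
      have := hmono.map_iSup_of_continuousAt hct (P.op_zero t)
      simp only [univ_inter, hset, hnu]
      exact this
  unfold idemInt
  rw [iSup_comm]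
  refine iSup_congr fun t => ?_
  rcases lt_or_ge t ⊤ with ht | ht
  · have h := key t ht; simp only [univ_inter] at h; simp [ht, h]
  · simp [not_lt.mpr ht, top_le_iff.mp ht]
end

section
/- Let ⊙ be a pseudo-multiplication on [0,∞], let ν be a σ-maxitive measure on a measurable space (E, 𝔅), and let f : E → [0,∞] be measurable. Then the set function B ↦ ∫_B f ⊙ dν is a σ-maxitive measure on 𝔅: it vanishes on the empty set and commutes with countable unions (via suprema). -/
open scoped ENNReal
open Set

/-- `B ↦ ∫_B f ⊙ dν` is a σ-maxitive measure. -/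
theorem idemInt_sigmaMaxitive {E : Type*} [MeasurableSpace E] (P : PseudoMul)
    (ν : Set E → ℝ≥0∞) (hν : SigmaMaxitive ν)
    (f : E → ℝ≥0∞) (hf : Measurable f) :
    SigmaMaxitive (fun B : Set E => idemInt P ν f B) := by
  constructor
  · simp [idemInt, hν.1, P.op_zero]
  · intro B hB
    have hmeas : ∀ t : ℝ≥0∞, ∀ n, MeasurableSet (B n ∩ {x | t < f x}) :=
      fun t n => (hB n).inter (hf measurableSet_Ioi)
    have key : ∀ t ∈ Iio (⊤ : ℝ≥0∞), P.op t (ν ((⋃ n, B n) ∩ {x | t < f x}))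
        = ⨆ n, P.op t (ν (B n ∩ {x | t < f x})) := by
      intro t ht
      rw [Set.iUnion_inter, hν.2 _ (hmeas t)]
      rcases eq_or_ne t 0 with rfl | ht0
      · simp [P.zero_op]
      · have hopen : IsOpen (Ioo (0:ℝ≥0∞) ⊤ ×ˢ (univ : Set ℝ≥0∞)) :=
          isOpen_Ioo.prod isOpen_univ
        have hmem : (t, ⨆ n, ν (B n ∩ {x | t < f x})) ∈
            Ioo (0:ℝ≥0∞) ⊤ ×ˢ (univ : Set ℝ≥0∞) :=
          ⟨⟨ht0.bot_lt, ht⟩, trivial⟩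
        have hca := P.continuousOn.continuousAt (hopen.mem_nhds hmem)
        have hcont : ContinuousAt (fun s => P.op t s)
            (⨆ n, ν (B n ∩ {x | t < f x})) :=
          hca.comp (Continuous.continuousAt (by continuity))
        exact (P.mono_right t).map_iSup_of_continuousAt hcont (P.op_zero t)
    simp only [idemInt]
    have heq : (⨆ t ∈ Iio (⊤ : ℝ≥0∞), P.op t (ν ((⋃ n, B n) ∩ {x | t < f x})))
        = ⨆ t ∈ Iio (⊤ : ℝ≥0∞), ⨆ n, P.op t (ν (B n ∩ {x | t < f x})) :=
      biSup_congr key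
    rw [heq]
    apply le_antisymm
    · exact iSup₂_le fun t ht => iSup_le fun n =>
        le_iSup_of_le n (le_iSup₂_of_le t ht le_rfl)
    · exact iSup_le fun n => iSup₂_le fun t ht =>
        le_iSup₂_of_le t ht (le_iSup_of_le n le_rfl)
end
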